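/- Let u, ω : ℝ³ → ℝ be arbitrary smooth functions of (t, x, y) and let h : ℝ → ℝ be smooth. With C¹ = u h', C² = yω h'' - (u_xx + (1/2)u²)h', C³ = -ω h' - y u h'' (derivatives of h evaluated at t), the following identity holds pointwise: D_t(C¹) + D_x(C²) + D_y(C³) = h'·(u_t - u·u_x - u_xxx - ω_y) + y h''·(ω_x - u_y). -/

import Mathlib

/-- Partial derivative with respect to the first variable `t`. -/
noncomputable def pt (F : ℝ → ℝ → ℝ → ℝ) (t x y : ℝ) : ℝ := deriv (fun s => F s x y) t

/-- Partial derivative with respect to the second variable `x`. -/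
noncomputable def px (F : ℝ → ℝ → ℝ → ℝ) (t x y : ℝ) : ℝ := deriv (fun s => F t s y) x

/-- Partial derivative with respect to the third variable `y`. -/
noncomputable def py (F : ℝ → ℝ → ℝ → ℝ) (t x y : ℝ) : ℝ := deriv (fun s => F t x s) y

/-- Smoothness of a function of three real variables. -/
def Smooth3 (F : ℝ → ℝ → ℝ → ℝ) : Prop :=
  ContDiff ℝ (⊤ : ℕ∞) (fun p : ℝ × ℝ × ℝ => F p.1 p.2.1 p.2.2)

/-- The Kadomtsev-Petviashvili system:
`u_t - u u_x - u_xxx - ω_y = 0`, `ω_x - u_y = 0`. -/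
def KPsystem (u ω : ℝ → ℝ → ℝ → ℝ) : Prop :=
  ∀ t x y : ℝ,
    pt u t x y - u t x y * px u t x y - px (px (px u)) t x y - py ω t x y = 0 ∧
    px ω t x y - py u t x y = 0

lemma sliceT {F : ℝ → ℝ → ℝ → ℝ} (hF : Smooth3 F) (x y : ℝ) :
    ContDiff ℝ ((⊤ : ℕ∞) : WithTop ℕ∞) (fun s => F s x y) :=
  (hF.of_le (by simp)).comp (contDiff_id.prodMk (contDiff_const.prodMk contDiff_const))

lemma sliceX {F : ℝ → ℝ → ℝ → ℝ} (hF : Smooth3 F) (t y : ℝ) :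
    ContDiff ℝ ((⊤ : ℕ∞) : WithTop ℕ∞) (fun s => F t s y) :=
  (hF.of_le (by simp)).comp (contDiff_const.prodMk (contDiff_id.prodMk contDiff_const))

lemma sliceY {F : ℝ → ℝ → ℝ → ℝ} (hF : Smooth3 F) (t x : ℝ) :
    ContDiff ℝ ((⊤ : ℕ∞) : WithTop ℕ∞) (fun s => F t x s) :=
  (hF.of_le (by simp)).comp (contDiff_const.prodMk (contDiff_const.prodMk contDiff_id))


/-- The divergence identity for the conserved vector of `X_h`,
valid for arbitrary smooth `u`, `ω`. -/
theorem divergence_identity_Xh (u ω : ℝ → ℝ → ℝ → ℝ) (h : ℝ → ℝ)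
    (hu : Smooth3 u) (hω : Smooth3 ω) (hh : ContDiff ℝ (⊤ : ℕ∞) h)
    (C1 C2 C3 : ℝ → ℝ → ℝ → ℝ)
    (hC1 : C1 = fun t x y => u t x y * deriv h t)
    (hC2 : C2 = fun t x y =>
      y * ω t x y * deriv (deriv h) t
      - (px (px u) t x y + (1/2) * (u t x y)^2) * deriv h t)
    (hC3 : C3 = fun t x y =>
      -(ω t x y) * deriv h t - y * u t x y * deriv (deriv h) t) :
    ∀ t x y : ℝ,
      pt C1 t x y + px C2 t x y + py C3 t x y
        = deriv h t *
            (pt u t x y - u t x y * px u t x y - px (px (px u)) t x y - py ω t x y)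
        + y * deriv (deriv h) t * (px ω t x y - py u t x y) := by
  subst hC1 hC2 hC3
  intro t x y
  have h1le : ((⊤ : ℕ∞) : WithTop ℕ∞) ≠ 0 := by simp
  have hh1 : ContDiff ℝ ((⊤ : ℕ∞) : WithTop ℕ∞) h := hh.of_le (by simp)
  have hh2 : ContDiff ℝ ((⊤ : ℕ∞) : WithTop ℕ∞) (deriv h) := (contDiff_infty_iff_deriv.mp hh1).2
  -- slices
  set g : ℝ → ℝ := fun s => u t s y with hg
  have hgC : ContDiff ℝ ((⊤ : ℕ∞) : WithTop ℕ∞) g := sliceX hu t y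
  have hgC1 : ContDiff ℝ ((⊤ : ℕ∞) : WithTop ℕ∞) (deriv g) := (contDiff_infty_iff_deriv.mp hgC).2
  have hgC2 : ContDiff ℝ ((⊤ : ℕ∞) : WithTop ℕ∞) (deriv (deriv g)) := (contDiff_infty_iff_deriv.mp hgC1).2
  have hgT : ContDiff ℝ ((⊤ : ℕ∞) : WithTop ℕ∞) (fun s => u s x y) := sliceT hu x y
  have hgY : ContDiff ℝ ((⊤ : ℕ∞) : WithTop ℕ∞) (fun s => u t x s) := sliceY hu t x
  have hwX : ContDiff ℝ ((⊤ : ℕ∞) : WithTop ℕ∞) (fun s => ω t s y) := sliceX hω t y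
  have hwY : ContDiff ℝ ((⊤ : ℕ∞) : WithTop ℕ∞) (fun s => ω t x s) := sliceY hω t x
  -- T1 : pt C1
  have T1 : pt (fun t x y => u t x y * deriv h t) t x y
      = deriv (fun s => u s x y) t * deriv h t + u t x y * deriv (deriv h) t := by
    exact ((hgT.differentiable h1le t).hasDerivAt.mul
      (hh2.differentiable h1le t).hasDerivAt).deriv
  -- T2 : px C2
  have key2 : (fun s => px (px u) t s y) = deriv (deriv g) := rfl
  have T2 : px (fun t x y =>
        y * ω t x y * deriv (deriv h) t
        - (px (px u) t x y + (1/2) * (u t x y)^2) * deriv h t) t x y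
      = y * deriv (fun s => ω t s y) x * deriv (deriv h) t
        - (deriv (deriv (deriv g)) x + u t x y * deriv g x) * deriv h t := by
    have h1 : HasDerivAt (fun s => y * ω t s y * deriv (deriv h) t)
        (y * deriv (fun s => ω t s y) x * deriv (deriv h) t) x := by
      have := ((hwX.differentiable h1le x).hasDerivAt.const_mul y).mul_const
          (deriv (deriv h) t)
      simpa using this
    have h2 : HasDerivAt (fun s => (px (px u) t s y + (1/2) * (u t s y)^2) * deriv h t)
        ((deriv (deriv (deriv g)) x + u t x y * deriv g x) * deriv h t) x := by
      have ha : HasDerivAt (fun s => px (px u) t s y) (deriv (deriv (deriv g)) x) x := by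
        rw [key2]; exact (hgC2.differentiable h1le x).hasDerivAt
      have hb : HasDerivAt (fun s => (1/2 : ℝ) * (u t s y)^2) (u t x y * deriv g x) x := by
        have := ((hgC.differentiable h1le x).hasDerivAt.fun_pow 2).const_mul (1/2 : ℝ)
        refine this.congr_deriv ?_
        rw [hg]
        ring
      exact (ha.add hb).mul_const _
    exact (h1.sub h2).deriv
  -- T3 : py C3
  have T3 : py (fun t x y =>
        -(ω t x y) * deriv h t - y * u t x y * deriv (deriv h) t) t x y
      = -(deriv (fun s => ω t x s) y) * deriv h t
        - (u t x y + y * deriv (fun s => u t x s) y) * deriv (deriv h) t := by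
    have h1 : HasDerivAt (fun s => -(ω t x s) * deriv h t)
        (-(deriv (fun s => ω t x s) y) * deriv h t) y :=
      ((hwY.differentiable h1le y).hasDerivAt.neg).mul_const _
    have h2 : HasDerivAt (fun s => s * u t x s * deriv (deriv h) t)
        ((u t x y + y * deriv (fun s => u t x s) y) * deriv (deriv h) t) y := by
      have := ((hasDerivAt_id y).fun_mul (hgY.differentiable h1le y).hasDerivAt).mul_const
          (deriv (deriv h) t)
      refine this.congr_deriv ?_
      simp only [id_eq]
      ring
    exact (h1.sub h2).deriv
  rw [T1, T2, T3]
  show _ = deriv h t * (deriv (fun s => u s x y) t - u t x y * deriv g x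
      - deriv (deriv (deriv g)) x - deriv (fun s => ω t x s) y)
    + y * deriv (deriv h) t * (deriv (fun s => ω t s y) x - deriv (fun s => u t x s) y)
  ring
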